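/- If A and B are positive semidefinite n×n matrices forming an antimonotone pair, and Z is normal, then the Frobenius norm of AZB is at least the Frobenius norm of ZAB. -/

import Mathlib

/-!
Conjugating by the eigenvector unitary `U` of `C` turns `A` and `B` into diagonal matrices
`diag a`, `diag b` with `a, b ≥ 0`, `a` increasing and `b` decreasing along the eigenvalues
of `C`, and turns `Z` into a normal matrix `W`. With `s i j = |W i j|²`,
`‖AZB‖² = ∑ s i j a_i² b_j²` and `‖ZAB‖² = ∑ s i j a_j² b_j²`. Normality of `W` says that
the row and column sums of `s` agree (`s` is a circulation on the complete digraph), so the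
second sum is `∑ s i j a_i² b_i²` and the difference is `∑ i, a_i² ∑ j, s i j (b_j² - b_i²)`.
By the layer-cake formula in `a²` it suffices that `∑ k ∈ S, ∑ j, s k j (b_j² - b_k²) ≥ 0`
for every superlevel set `S` of `a²`. This sum is the flow of the circulation across the cut
`(S, Sᶜ)` weighted by `b²`; it is nonnegative because in- and out-flow across a cut agree
and `b²` is larger off `S` than on `S`.
-/

open Matrix ComplexOrder

/-- Apply a real function to a Hermitian matrix via the spectral decomposition. -/
noncomputable def hermFun {n : ℕ} {C : Matrix (Fin n) (Fin n) ℂ} (hC : C.IsHermitian)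
    (f : ℝ → ℝ) : Matrix (Fin n) (Fin n) ℂ :=
  (hC.eigenvectorUnitary : Matrix (Fin n) (Fin n) ℂ) *
    Matrix.diagonal (fun i => (f (hC.eigenvalues i) : ℂ)) *
    (star (hC.eigenvectorUnitary : Matrix (Fin n) (Fin n) ℂ))

/-- `(A, B)` is a monotone pair: `A = f(C)`, `B = g(C)` for a Hermitian `C` and
nondecreasing real functions `f`, `g`. -/
def MonotonePair {n : ℕ} (A B : Matrix (Fin n) (Fin n) ℂ) : Prop :=
  ∃ C : Matrix (Fin n) (Fin n) ℂ, ∃ hC : C.IsHermitian, ∃ f g : ℝ → ℝ,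
    Monotone f ∧ Monotone g ∧ A = hermFun hC f ∧ B = hermFun hC g

/-- `(A, B)` is an antimonotone pair: `A = f(C)`, `B = g(C)` for a Hermitian `C`,
`f` nondecreasing and `g` nonincreasing. -/
def AntimonotonePair {n : ℕ} (A B : Matrix (Fin n) (Fin n) ℂ) : Prop :=
  ∃ C : Matrix (Fin n) (Fin n) ℂ, ∃ hC : C.IsHermitian, ∃ f g : ℝ → ℝ,
    Monotone f ∧ Antitone g ∧ A = hermFun hC f ∧ B = hermFun hC g

/-- The Frobenius (Hilbert–Schmidt) norm `(Tr X*X)^(1/2)`. -/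
noncomputable def frobNorm {n : ℕ} (X : Matrix (Fin n) (Fin n) ℂ) : ℝ :=
  Real.sqrt ((Matrix.trace (Xᴴ * X)).re)

section BalancedWeights

variable {ι : Type*} [Fintype ι] {s : ι → ι → ℝ}

lemma sum_sum_mul_right_eq_sum_sum_mul_left_of_balanced
    (hbal : ∀ j, ∑ i, s i j = ∑ i, s j i) (φ : ι → ℝ) :
    ∑ i, ∑ j, s i j * φ j = ∑ i, ∑ j, s i j * φ i := by
  rw [Finset.sum_comm]
  simp_rw [← Finset.sum_mul, hbal]

lemma sum_sum_mul_sub_eq_sum_sum_compl [DecidableEq ι] (hbal : ∀ j, ∑ i, s i j = ∑ i, s j i)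
    (y : ι → ℝ) (S : Finset ι) :
    ∑ k ∈ S, ∑ j, s k j * (y j - y k) = ∑ k ∈ S, ∑ j ∈ Sᶜ, (s k j * y j - s j k * y k) := by
  have hout (k : ι) : ∑ j, s k j * y k = ∑ j, s j k * y k := by
    simp_rw [← Finset.sum_mul, hbal]
  have hinner : ∑ k ∈ S, ∑ j ∈ S, (s k j * y j - s j k * y k) = 0 := by
    simp_rw [Finset.sum_sub_distrib]
    rw [sub_eq_zero, Finset.sum_comm]
  calc ∑ k ∈ S, ∑ j, s k j * (y j - y k)
      = ∑ k ∈ S, ∑ j, (s k j * y j - s j k * y k) := by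
        simp_rw [mul_sub, Finset.sum_sub_distrib, hout]
    _ = ∑ k ∈ S, ∑ j ∈ S, (s k j * y j - s j k * y k)
          + ∑ k ∈ S, ∑ j ∈ Sᶜ, (s k j * y j - s j k * y k) := by
        rw [← Finset.sum_add_distrib]
        simp_rw [Finset.sum_add_sum_compl]
    _ = _ := by rw [hinner, zero_add]

lemma sum_sum_mul_sub_nonneg_of_balanced [DecidableEq ι] (hs : ∀ i j, 0 ≤ s i j)
    (hbal : ∀ j, ∑ i, s i j = ∑ i, s j i) {y : ι → ℝ} {S : Finset ι}
    (hy : ∀ k ∈ S, ∀ j ∉ S, y k ≤ y j) : 0 ≤ ∑ k ∈ S, ∑ j, s k j * (y j - y k) := by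
  obtain rfl | hS := S.eq_empty_or_nonempty
  · simp
  set m := S.sup' hS y
  -- after shifting `y` by `m`, which separates its values on `S` from those off `S`,
  -- every term of the cut sum is nonnegative
  have hm : ∀ k j, y j - y k = (y j - m) - (y k - m) := fun _ _ => by ring
  simp_rw [hm, sum_sum_mul_sub_eq_sum_sum_compl hbal]
  refine Finset.sum_nonneg fun k hk => Finset.sum_nonneg fun j hj => ?_
  have hk : y k ≤ m := Finset.le_sup' y hk
  have hj : m ≤ y j := Finset.sup'_le hS y fun k hk => hy k hk j (Finset.mem_compl.1 hj)
  nlinarith [hs k j, hs j k]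

end BalancedWeights

open Set MeasureTheory in
lemma sum_mul_nonneg_of_sum_superlevel_nonneg {ι : Type*} [Fintype ι] {x c : ι → ℝ}
    (hx : 0 ≤ x) (h : ∀ t > 0, 0 ≤ ∑ i with t < x i, c i) : 0 ≤ ∑ i, x i * c i := by
  have hlayer (i : ι) :
      ∫ t in Ioi 0, (Iio (x i)).indicator (fun _ => c i) t = x i * c i := by
    rw [integral_indicator_const _ measurableSet_Iio,
      measureReal_restrict_apply measurableSet_Iio, Iio_inter_Ioi,
      Real.volume_real_Ioo_of_le (a := 0) (hx i), sub_zero, smul_eq_mul]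
  have hint (i : ι) :
      Integrable ((Iio (x i)).indicator (fun _ => c i)) (volume.restrict (Ioi 0)) := by
    refine (integrable_indicator_iff measurableSet_Iio).2 (integrableOn_const ?_)
    rw [Measure.restrict_apply measurableSet_Iio, Iio_inter_Ioi]
    exact measure_Ioo_lt_top.ne
  simp_rw [← hlayer]
  rw [← integral_finsetSum _ fun i _ => hint i]
  refine setIntegral_nonneg measurableSet_Ioi fun t ht => ?_
  simpa [Finset.sum_filter, Set.indicator_apply] using h t ht

lemma sum_sum_mul_le_of_balanced_of_antivary {ι : Type*} [Fintype ι] {s : ι → ι → ℝ}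
    {x y : ι → ℝ} (hs : ∀ i j, 0 ≤ s i j) (hbal : ∀ j, ∑ i, s i j = ∑ i, s j i) (hx : 0 ≤ x)
    (hxy : Antivary y x) :
    ∑ i, ∑ j, s i j * (x j * y j) ≤ ∑ i, ∑ j, s i j * (x i * y j) := by
  classical
  have hdiff : ∑ i, ∑ j, s i j * (x i * y j) - ∑ i, ∑ j, s i j * (x i * y i)
      = ∑ i, x i * ∑ j, s i j * (y j - y i) := by
    simp only [Finset.mul_sum, ← Finset.sum_sub_distrib]
    refine Finset.sum_congr rfl fun i _ => Finset.sum_congr rfl fun j _ => by ring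
  rw [sum_sum_mul_right_eq_sum_sum_mul_left_of_balanced hbal (fun j => x j * y j),
    ← sub_nonneg, hdiff]
  refine sum_mul_nonneg_of_sum_superlevel_nonneg hx fun t _ =>
    sum_sum_mul_sub_nonneg_of_balanced hs hbal fun k hk j hj => ?_
  simp only [Finset.mem_filter, Finset.mem_univ, true_and, not_lt] at hk hj
  exact hxy (hj.trans_lt hk)

section Unitary

variable {R : Type*} [Monoid R] [StarMul R] {U : R}

lemma star_mul_mul_cancel_of_mem_unitary (hU : U ∈ unitary R) (x : R) :
    star U * (U * x) = x := by
  rw [← mul_assoc, Unitary.star_mul_self_of_mem hU, one_mul]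

lemma mul_star_mul_cancel_of_mem_unitary (hU : U ∈ unitary R) (x : R) :
    U * (star U * x) = x := by
  rw [← mul_assoc, Unitary.mul_star_self_of_mem hU, one_mul]

lemma isStarNormal_star_mul_mul_of_mem_unitary (hU : U ∈ unitary R) (x : R) [IsStarNormal x] :
    IsStarNormal (star U * x * U) where
  star_comm_self := by
    simp only [Commute, SemiconjBy, star_mul, star_star, mul_assoc,
      mul_star_mul_cancel_of_mem_unitary hU]
    rw [← mul_assoc (star x), star_comm_self', mul_assoc]

end Unitary

section NormSq

variable {m n : Type*}

lemma Matrix.conjTranspose_mul_self_apply_self [Fintype m] (X : Matrix m n ℂ) (j : n) :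
    (Xᴴ * X) j j = ∑ i, (Complex.normSq (X i j) : ℂ) := by
  simp [mul_apply, Complex.normSq_eq_conj_mul_self]

lemma Matrix.mul_conjTranspose_self_apply_self [Fintype n] (X : Matrix m n ℂ) (i : m) :
    (X * Xᴴ) i i = ∑ j, (Complex.normSq (X i j) : ℂ) := by
  simp [mul_apply, Complex.mul_conj]

lemma Matrix.sum_normSq_col_eq_sum_normSq_row [Fintype n] {X : Matrix n n ℂ}
    (hX : Xᴴ * X = X * Xᴴ) (j : n) :
    ∑ i, Complex.normSq (X i j) = ∑ i, Complex.normSq (X j i) := by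
  have := congr_fun₂ hX j j
  rw [conjTranspose_mul_self_apply_self, mul_conjTranspose_self_apply_self] at this
  exact_mod_cast this

end NormSq

lemma frobNorm_eq_sqrt_sum_normSq {n : ℕ} (X : Matrix (Fin n) (Fin n) ℂ) :
    frobNorm X = √(∑ i, ∑ j, Complex.normSq (X i j)) := by
  rw [frobNorm, trace, Finset.sum_comm]
  simp [conjTranspose_mul_self_apply_self]

lemma frobNorm_mul_mul_star_of_mem_unitary {n : ℕ} {U : Matrix (Fin n) (Fin n) ℂ}
    (hU : U ∈ unitary (Matrix (Fin n) (Fin n) ℂ)) (M : Matrix (Fin n) (Fin n) ℂ) :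
    frobNorm (U * M * star U) = frobNorm M := by
  simp only [frobNorm, ← star_eq_conjTranspose, star_mul, star_star, mul_assoc,
    star_mul_mul_cancel_of_mem_unitary hU]
  rw [trace_mul_comm]
  simp only [mul_assoc, Unitary.star_mul_self_of_mem hU, mul_one]

lemma frobNorm_mul_mul_le_of_unitary_diagonal {n : ℕ} {U Z : Matrix (Fin n) (Fin n) ℂ}
    (hU : U ∈ unitary (Matrix (Fin n) (Fin n) ℂ)) (hZ : Zᴴ * Z = Z * Zᴴ) {a b : Fin n → ℝ}
    (ha : 0 ≤ a) (hb : 0 ≤ b) (hab : Antivary b a) :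
    frobNorm (Z * (U * diagonal (fun i => (a i : ℂ)) * star U) *
        (U * diagonal (fun i => (b i : ℂ)) * star U)) ≤
      frobNorm (U * diagonal (fun i => (a i : ℂ)) * star U * Z *
        (U * diagonal (fun i => (b i : ℂ)) * star U)) := by
  set W := star U * Z * U
  have : IsStarNormal Z := ⟨hZ⟩
  have : IsStarNormal W := isStarNormal_star_mul_mul_of_mem_unitary hU Z
  have hAZB : U * diagonal (fun i => (a i : ℂ)) * star U * Z *
      (U * diagonal (fun i => (b i : ℂ)) * star U) =
      U * (diagonal (fun i => (a i : ℂ)) * W * diagonal (fun i => (b i : ℂ))) * star U := by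
    simp only [W, mul_assoc]
  have hZAB : Z * (U * diagonal (fun i => (a i : ℂ)) * star U) *
      (U * diagonal (fun i => (b i : ℂ)) * star U) =
      U * (W * diagonal (fun i => (a i : ℂ)) * diagonal (fun i => (b i : ℂ))) * star U := by
    simp only [W, mul_assoc, star_mul_mul_cancel_of_mem_unitary hU,
      mul_star_mul_cancel_of_mem_unitary hU]
  rw [hAZB, hZAB, frobNorm_mul_mul_star_of_mem_unitary hU,
    frobNorm_mul_mul_star_of_mem_unitary hU, frobNorm_eq_sqrt_sum_normSq,
    frobNorm_eq_sqrt_sum_normSq]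
  refine Real.sqrt_le_sqrt ?_
  have hbal := sum_normSq_col_eq_sum_normSq_row (star_comm_self' W)
  have hab2 : Antivary (b ^ 2) (a ^ 2) := fun i j hij =>
    pow_le_pow_left₀ (hb j) (hab (lt_of_pow_lt_pow_left₀ 2 (ha j) hij)) 2
  convert sum_sum_mul_le_of_balanced_of_antivary (fun i j => Complex.normSq_nonneg (W i j)) hbal
    (fun i => sq_nonneg (a i)) hab2 using 3 with i _ j _ i _ j _
  · simp only [mul_diagonal, map_mul, Complex.normSq_ofReal, Pi.pow_apply]
    ring
  · simp only [mul_diagonal, diagonal_mul, map_mul, Complex.normSq_ofReal, Pi.pow_apply]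
    ring

lemma hermFun_posSemidef_iff {n : ℕ} {C : Matrix (Fin n) (Fin n) ℂ} (hC : C.IsHermitian)
    (f : ℝ → ℝ) : (hermFun hC f).PosSemidef ↔ ∀ i, 0 ≤ f (hC.eigenvalues i) := by
  simp only [hermFun, Unitary.isUnit_coe.posSemidef_star_right_conjugate_iff,
    posSemidef_diagonal_iff, Complex.zero_le_real]

theorem frobenius_chebyshev_antimonotone {n : ℕ} (A B Z : Matrix (Fin n) (Fin n) ℂ)
    (hA : A.PosSemidef) (hB : B.PosSemidef) (hZ : Zᴴ * Z = Z * Zᴴ)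
    (hanti : AntimonotonePair A B) :
    frobNorm (A * Z * B) ≥ frobNorm (Z * A * B) := by
  obtain ⟨C, hC, f, g, hf, hg, rfl, rfl⟩ := hanti
  exact frobNorm_mul_mul_le_of_unitary_diagonal hC.eigenvectorUnitary.2 hZ
    ((hermFun_posSemidef_iff hC f).1 hA) ((hermFun_posSemidef_iff hC g).1 hB)
    ((hg.antivary hf).comp_right hC.eigenvalues)
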